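/- Let Λ be a lattice of signature (3,19), κ ∈ Λ ⊗ ℝ with κ² > 0, and let x₁, x₂ ∈ Λ ⊗ ℝ be vectors with x₁² > 0, x₂² > 0 such that κ, x₁, x₂ are pairwise orthogonal. Then there exists ε > 0 such that every δ ∈ Λ with δ² = -2, ⟨δ,κ⟩ = 0, |⟨δ,x₁⟩| < ε‖δ‖, and |⟨δ,x₂⟩| < ε‖δ‖ satisfies ‖δ‖ ≤ 1/ε. Equivalently, there is no sequence δᵢ ∈ Λ with δᵢ² = -2, ‖δᵢ‖ → ∞, and ⟨δᵢ,κ⟩, ⟨δᵢ,x₁⟩, ⟨δᵢ,x₂⟩ → 0. -/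

import Mathlib

/-!
The orthogonal complement `W` of `κ, x₁, x₂` is negative definite: otherwise `κ, x₁, x₂` and a
vector `w ∈ W` with `B w w ≥ 0` would span a 4-dimensional subspace on which `B` is positive
semidefinite, and it would meet the 19-dimensional negative definite subspace given by the
signature inside a 22-dimensional space. By compactness of the unit sphere, `B` then stays
uniformly negative on a cone `|⟨u, κ⟩|, |⟨u, x₁⟩|, |⟨u, x₂⟩| < ε ‖u‖` around `W`, and on that cone
`B δ δ = -2` bounds `‖δ‖`.
-/

open Module Submodule Metric

namespace LinearMap.BilinForm

section Orthogonal

variable {V : Type*} [AddCommGroup V] [Module ℝ V] (B : LinearMap.BilinForm ℝ V)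
  {ι : Type*} [Fintype ι] {v : ι → V}

theorem apply_sum_smul_self_of_iIsOrtho (hv : B.iIsOrtho v) (t : ι → ℝ) :
    B (∑ i, t i • v i) (∑ i, t i • v i) = ∑ i, t i ^ 2 * B (v i) (v i) := by
  simp only [map_sum, map_smul, LinearMap.sum_apply, LinearMap.smul_apply, smul_eq_mul]
  refine Finset.sum_congr rfl fun i _ => ?_
  rw [Finset.sum_eq_single i (fun j _ hji => by rw [iIsOrtho_def.1 hv j i hji, mul_zero])
    (by simp)]
  ring

theorem apply_self_nonneg_of_mem_span (hv : B.iIsOrtho v) (hnonneg : ∀ i, 0 ≤ B (v i) (v i))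
    {x : V} (hx : x ∈ span ℝ (Set.range v)) : 0 ≤ B x x := by
  obtain ⟨t, rfl⟩ := (mem_span_range_iff_exists_fun ℝ).1 hx
  rw [B.apply_sum_smul_self_of_iIsOrtho hv]
  exact Finset.sum_nonneg fun i _ => mul_nonneg (sq_nonneg _) (hnonneg i)

theorem apply_self_pos_of_mem_span (hv : B.iIsOrtho v) (hpos : ∀ i, 0 < B (v i) (v i))
    {x : V} (hx : x ∈ span ℝ (Set.range v)) (hx0 : x ≠ 0) : 0 < B x x := by
  obtain ⟨t, rfl⟩ := (mem_span_range_iff_exists_fun ℝ).1 hx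
  obtain ⟨i, hi⟩ : ∃ i, t i ≠ 0 := by
    by_contra! ht
    exact hx0 (by simp [ht])
  rw [B.apply_sum_smul_self_of_iIsOrtho hv]
  exact Finset.sum_pos' (fun j _ => mul_nonneg (sq_nonneg _) (hpos j).le)
    ⟨i, Finset.mem_univ i, mul_pos (by positivity) (hpos i)⟩

end Orthogonal

section Signature

variable {V : Type*} [AddCommGroup V] [Module ℝ V] (B : LinearMap.BilinForm ℝ V)

theorem finrank_add_finrank_le_of_nonneg_of_neg [FiniteDimensional ℝ V] (P N : Submodule ℝ V)
    (hP : ∀ x ∈ P, 0 ≤ B x x) (hN : ∀ x ∈ N, x ≠ 0 → B x x < 0) :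
    finrank ℝ P + finrank ℝ N ≤ finrank ℝ V :=
  Submodule.finrank_add_finrank_le_of_disjoint <| Submodule.disjoint_def.2 fun x hxP hxN => by
    by_contra hx0
    exact (hP x hxP).not_gt (hN x hxN hx0)

theorem exists_negDef_of_signature {p q : ℕ} (c : Basis (Fin (p + q)) ℝ V)
    (hc : ∀ i j, B (c i) (c j) = if i = j then (if (i : ℕ) < p then 1 else -1) else 0) :
    ∃ N : Submodule ℝ V, (∀ x ∈ N, x ≠ 0 → B x x < 0) ∧ finrank ℝ V = p + finrank ℝ N := by
  have hinj := Fin.natAdd_injective q p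
  refine ⟨span ℝ (Set.range (c ∘ Fin.natAdd p)), fun x hx hx0 => ?_, ?_⟩
  · have hortho : (-B).iIsOrtho (c ∘ Fin.natAdd p) :=
      iIsOrtho_def.2 fun i j hij => by simp [hc, hinj.ne hij]
    have hpos : ∀ i, 0 < (-B) ((c ∘ Fin.natAdd p) i) ((c ∘ Fin.natAdd p) i) := by
      simp [hc]
    simpa using (-B).apply_self_pos_of_mem_span hortho hpos hx hx0
  · rw [finrank_span_eq_card (c.linearIndependent.comp _ hinj), finrank_eq_card_basis c]
    simp

theorem apply_self_neg_of_forall_isOrtho [FiniteDimensional ℝ V] (hB : B.IsRefl) {p : ℕ}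
    (N : Submodule ℝ V) (hN : ∀ x ∈ N, x ≠ 0 → B x x < 0) (hdim : finrank ℝ V ≤ p + finrank ℝ N)
    {u : Fin p → V} (hu : B.iIsOrtho u) (hpos : ∀ i, 0 < B (u i) (u i))
    {w : V} (hw : ∀ i, B w (u i) = 0) (hw0 : w ≠ 0) : B w w < 0 := by
  by_contra! hww
  have hw_notMem : w ∉ span ℝ (Set.range u) := fun hmem => by
    have hwu : span ℝ (Set.range u) ≤ LinearMap.ker (B w) :=
      span_le.2 (Set.range_subset_iff.2 fun i => LinearMap.mem_ker.2 (hw i))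
    exact (B.apply_self_pos_of_mem_span hu hpos hmem hw0).ne' (hwu hmem)
  set v : Fin (p + 1) → V := Fin.snoc u w
  have hv : B.iIsOrtho v := by
    refine iIsOrtho_def.2 fun i j hij => ?_
    induction i using Fin.lastCases with
    | last =>
      induction j using Fin.lastCases with
      | last => exact absurd rfl hij
      | cast j => simpa [v] using hw j
    | cast i =>
      induction j using Fin.lastCases with
      | last => simpa [v] using hB _ _ (hw i)
      | cast j => simpa [v] using iIsOrtho_def.1 hu i j (fun h => hij (congrArg _ h))
  have hli : LinearIndependent ℝ v := linearIndependent_finSnoc.2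
    ⟨B.linearIndependent_of_iIsOrtho hu fun i => (hpos i).ne', hw_notMem⟩
  have hnonneg : ∀ i, 0 ≤ B (v i) (v i) :=
    Fin.lastCases (by simpa [v] using hww) fun i => by simpa [v] using (hpos i).le
  have := B.finrank_add_finrank_le_of_nonneg_of_neg (span ℝ (Set.range v)) N
    (fun x hx => B.apply_self_nonneg_of_mem_span hv hnonneg hx) hN
  rw [finrank_span_eq_card hli, Fintype.card_fin] at this
  omega

end Signature

theorem exists_pos_apply_self_le_of_neg_on_ker {V F : Type*} [NormedAddCommGroup V]
    [NormedSpace ℝ V] [FiniteDimensional ℝ V] [NormedAddCommGroup F] [NormedSpace ℝ F]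
    (B : LinearMap.BilinForm ℝ V) (L : V →ₗ[ℝ] F)
    (hneg : ∀ x ∈ LinearMap.ker L, x ≠ 0 → B x x < 0) :
    ∃ ε > 0, ∀ x, ‖L x‖ < ε * ‖x‖ → B x x ≤ -ε * ‖x‖ ^ 2 := by
  have := isModuleTopologyOfFiniteDimensional (𝕜 := ℝ) (E := V)
  have hcont : Continuous fun u => max (-B u u) ‖L u‖ :=
    ((IsModuleTopology.continuous_bilinear_of_finite_left B).comp
      (continuous_id.prodMk continuous_id)).neg.max L.continuous_of_finiteDimensional.norm
  have hpos : ∀ u ∈ sphere (0 : V) 1, 0 < max (-B u u) ‖L u‖ := fun u hu => by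
    by_cases hLu : L u = 0
    · exact lt_max_of_lt_left (neg_pos.2 (hneg u hLu (ne_zero_of_mem_unit_sphere ⟨u, hu⟩)))
    · exact lt_max_of_lt_right (norm_pos_iff.2 hLu)
  obtain ⟨ε, hε, hεle⟩ := (isCompact_sphere (0 : V) 1).exists_forall_le' hcont.continuousOn hpos
  refine ⟨ε, hε, fun x hx => ?_⟩
  have hx0 : 0 < ‖x‖ := pos_of_mul_pos_right ((norm_nonneg _).trans_lt hx) hε.le
  set u := ‖x‖⁻¹ • x
  have hu : u ∈ sphere (0 : V) 1 := by simp [u, norm_smul, hx0.ne']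
  have hLu : ‖L u‖ < ε := by
    rw [map_smul, norm_smul, norm_inv, norm_norm, inv_mul_lt_iff₀ hx0, mul_comm]
    exact hx
  have hBu : ε ≤ -B u u :=
    (le_max_iff.1 (hεle u hu)).resolve_right hLu.not_ge
  have hBx : B x x = ‖x‖ ^ 2 * B u u := by
    simp only [u, map_smul, LinearMap.smul_apply, smul_eq_mul]
    field_simp
  rw [hBx]
  nlinarith [sq_nonneg ‖x‖]

end LinearMap.BilinForm

open LinearMap.BilinForm in
theorem stmt2_general (V : Type*) [NormedAddCommGroup V] [NormedSpace ℝ V]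
    (b : Module.Basis (Fin 22) ℝ V)
    (B : V →ₗ[ℝ] V →ₗ[ℝ] ℝ)
    (hsymm : ∀ x y, B x y = B y x)
    (hsig : ∃ c : Module.Basis (Fin 22) ℝ V, ∀ i j, B (c i) (c j) =
      if i = j then (if (i : ℕ) < 3 then 1 else -1) else 0)
    (κ x₁ x₂ : V) (hκ : 0 < B κ κ) (hx₁ : 0 < B x₁ x₁) (hx₂ : 0 < B x₂ x₂)
    (h12 : B x₁ x₂ = 0) (hκ1 : B κ x₁ = 0) (hκ2 : B κ x₂ = 0) :
    ∃ ε : ℝ, 0 < ε ∧ ∀ δ : V, δ ∈ Submodule.span ℤ (Set.range b) →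
      B δ δ = -2 → B δ κ = 0 →
      |B δ x₁| < ε * ‖δ‖ → |B δ x₂| < ε * ‖δ‖ → ‖δ‖ ≤ 1 / ε := by
  obtain ⟨c, hc⟩ := hsig
  have := Module.Finite.of_basis c
  obtain ⟨N, hN, hdim⟩ := exists_negDef_of_signature (p := 3) (q := 19) B c hc
  set u : Fin 3 → V := ![κ, x₁, x₂]
  have hu : iIsOrtho B u := by
    refine iIsOrtho_def.2 fun i j hij => ?_
    fin_cases i <;> fin_cases j <;>
      simp [u, h12, hκ1, hκ2, hsymm x₁ κ, hsymm x₂ κ, hsymm x₂ x₁] at hij ⊢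
  have hupos : ∀ i, 0 < B (u i) (u i) := by
    intro i; fin_cases i <;> simpa [u]
  set L : V →ₗ[ℝ] Fin 3 → ℝ := LinearMap.pi fun i => B.flip (u i)
  obtain ⟨ε₀, hε₀, hcone⟩ := exists_pos_apply_self_le_of_neg_on_ker B L fun w hw hw0 =>
    apply_self_neg_of_forall_isOrtho B (isSymm_def.2 hsymm).isRefl N hN hdim.le hu hupos
      (fun i => congrFun hw i) hw0
  refine ⟨min ε₀ 1 / 2, by positivity, fun δ _ hδδ hδκ h₁ h₂ => ?_⟩
  have hδ : 0 < ‖δ‖ := norm_pos_iff.2 fun h => by norm_num [h] at hδδ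
  have hε : min ε₀ 1 / 2 * ‖δ‖ ≤ ε₀ * ‖δ‖ := by gcongr; linarith [min_le_left ε₀ 1]
  have hLδ : ‖L δ‖ < ε₀ * ‖δ‖ := by
    refine (pi_norm_lt_iff (by positivity)).2 fun i => ?_
    fin_cases i <;> simp [L, u, hδκ] <;> first | positivity | linarith
  have hbound := hcone δ hLδ
  rw [hδδ] at hbound
  rw [le_div_iff₀ (by positivity)]
  -- `hbound` says `ε₀ ‖δ‖² ≤ 2`, and `ε ≤ min (ε₀ / 2) (1 / 2)` gives `ε² ≤ ε₀ / 4`.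
  nlinarith [min_le_left ε₀ 1, min_le_right ε₀ 1, mul_pos hε₀ hδ]

/-- Let `Λ` be an (even unimodular) lattice of signature (3,19) in `V = Λ ⊗ ℝ`,
`κ` of positive square, and `x₁, x₂` of positive square with `κ, x₁, x₂` pairwise
orthogonal.  Then there is `ε > 0` such that every `δ ∈ Λ` with `⟨δ,δ⟩ = -2`,
`⟨δ,κ⟩ = 0`, `|⟨δ,x₁⟩| < ε‖δ‖` and `|⟨δ,x₂⟩| < ε‖δ‖` satisfies `‖δ‖ ≤ 1/ε`. -/
theorem stmt2 (V : Type*) [NormedAddCommGroup V] [NormedSpace ℝ V]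
    (b : Module.Basis (Fin 22) ℝ V)
    (B : V →ₗ[ℝ] V →ₗ[ℝ] ℝ)
    (hsymm : ∀ x y, B x y = B y x)
    (hint : ∀ i j, ∃ n : ℤ, B (b i) (b j) = n)
    (heven : ∀ x ∈ Submodule.span ℤ (Set.range b), ∃ n : ℤ, B x x = 2 * n)
    (hunimod : ∃ G : Matrix (Fin 22) (Fin 22) ℤ,
      (∀ i j, (G i j : ℝ) = B (b i) (b j)) ∧ (G.det = 1 ∨ G.det = -1))
    (hsig : ∃ c : Module.Basis (Fin 22) ℝ V, ∀ i j, B (c i) (c j) =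
      if i = j then (if (i : ℕ) < 3 then 1 else -1) else 0)
    (κ x₁ x₂ : V) (hκ : 0 < B κ κ) (hx₁ : 0 < B x₁ x₁) (hx₂ : 0 < B x₂ x₂)
    (h12 : B x₁ x₂ = 0) (hκ1 : B κ x₁ = 0) (hκ2 : B κ x₂ = 0) :
    ∃ ε : ℝ, 0 < ε ∧ ∀ δ : V, δ ∈ Submodule.span ℤ (Set.range b) →
      B δ δ = -2 → B δ κ = 0 →
      |B δ x₁| < ε * ‖δ‖ → |B δ x₂| < ε * ‖δ‖ → ‖δ‖ ≤ 1 / ε :=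
  stmt2_general V b B hsymm hsig κ x₁ x₂ hκ hx₁ hx₂ h12 hκ1 hκ2
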